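/- For every m ∈ ℕ, ∫_{ℝ²} φ_m(x)·φ_0(y)·φ_m((x+y)/√2)·φ_0((y−x)/√2) dx dy = 2^{−m/2}, where φ_m denotes the m-th Hermite function. -/

import Mathlib

/-!
Expanding the rotated pair `φ_m((x+y)/√2) φ_0((y-x)/√2)` in the product basis `φ_k(x) φ_{m-k}(y)`
(with amplitudes `√(C(m,k) / 2^m)`) reduces the integral, by Fubini and the orthonormality of the
Hermite functions, to the amplitude with `k = m`, which is `2^{-m/2}`.

The expansion comes from the addition formula
`2^{n/2} He_n((u+v)/√2) = ∑ C(n,i) He_i(u) He_{n-i}(v)`: differentiate `γ(t+u) γ(t+v)`, with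
`γ(t) = exp(-t²/2)`, `n` times at `t = 0`, by Leibniz on one side and, since the product is a
multiple of `γ(√2 t + (u+v)/√2)`, by Rodrigues' formula on the other. Orthogonality of the `He_n`
against `γ` follows from `He_{n+1} = X He_n - He_n'` and one integration by parts.
-/

open scoped BigOperators
open MeasureTheory

/-- The physicists' Hermite polynomial `H_m(x) = 2^{m/2}·He_m(x√2)`, where `He_m` is
the probabilists' Hermite polynomial. -/
noncomputable def physHermite (m : ℕ) (x : ℝ) : ℝ :=
  (2 : ℝ) ^ ((m : ℝ) / 2) * Polynomial.aeval (x * Real.sqrt 2) (Polynomial.hermite m)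

/-- The `m`-th Hermite function `φ_m(x) = (2^m·m!·√π)^{−1/2}·H_m(x)·e^{−x²/2}`. -/
noncomputable def hermiteFun (m : ℕ) (x : ℝ) : ℝ :=
  ((2 : ℝ) ^ m * (m.factorial : ℝ) * Real.sqrt Real.pi) ^ (-(1 / 2 : ℝ)) *
    physHermite m x * Real.exp (-x ^ 2 / 2)

open Polynomial Real

section Gaussian

variable {R : Type*} [CommSemiring R] [Algebra R ℝ]

theorem integrable_aeval_mul_gaussian (p : R[X]) :
    Integrable fun x : ℝ => aeval x p * exp (-(x ^ 2 / 2)) := by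
  induction p using Polynomial.induction_on' with
  | add p q hp hq => simpa [add_mul, Pi.add_def] using hp.add hq
  | monomial n a =>
    have h := integrable_rpow_mul_exp_neg_mul_sq (b := 1 / 2) (by norm_num)
      (s := n) (by linarith [(n.cast_nonneg : (0 : ℝ) ≤ n)])
    simpa [aeval_monomial, mul_assoc, div_eq_inv_mul] using h.const_mul (algebraMap R ℝ a)

theorem integral_aeval_derivative_mul_gaussian (p : R[X]) :
    ∫ x : ℝ, aeval x (derivative p) * exp (-(x ^ 2 / 2)) =
      ∫ x : ℝ, x * aeval x p * exp (-(x ^ 2 / 2)) := by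
  have hderiv (x : ℝ) : HasDerivAt (fun x => aeval x p * exp (-(x ^ 2 / 2)))
      (aeval x (derivative p) * exp (-(x ^ 2 / 2)) - x * aeval x p * exp (-(x ^ 2 / 2))) x := by
    have := (p.hasDerivAt_aeval x).fun_mul (((hasDerivAt_pow 2 x).div_const 2).fun_neg.exp)
    refine this.congr_deriv ?_
    push_cast
    ring
  have hX : Integrable fun x : ℝ => x * aeval x p * exp (-(x ^ 2 / 2)) := by
    have := integrable_aeval_mul_gaussian (X * p)
    simp only [map_mul, aeval_X] at this
    exact this
  have h := integral_eq_zero_of_hasDerivAt_of_integrable hderiv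
    ((integrable_aeval_mul_gaussian _).sub hX) (integrable_aeval_mul_gaussian p)
  rwa [integral_sub (integrable_aeval_mul_gaussian _) hX, sub_eq_zero] at h

end Gaussian

theorem derivative_hermite_succ (n : ℕ) :
    derivative (hermite (n + 1)) = (n + 1 : ℤ[X]) * hermite n := by
  induction n with
  | zero => simp [hermite_zero]
  | succ n ih =>
    rw [hermite_succ (n + 1), derivative_sub, derivative_mul, derivative_X, ih, hermite_succ n]
    simp only [derivative_mul, derivative_add, derivative_natCast, derivative_one]
    push_cast
    ring

theorem integral_hermite_mul_hermite_succ_mul_gaussian (m n : ℕ) :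
    ∫ x : ℝ, aeval x (hermite m) * aeval x (hermite (n + 1)) * exp (-(x ^ 2 / 2)) =
      ∫ x : ℝ, aeval x (derivative (hermite m)) * aeval x (hermite n) * exp (-(x ^ 2 / 2)) := by
  have hI (p q : ℤ[X]) :
      Integrable fun x : ℝ => aeval x p * aeval x q * exp (-(x ^ 2 / 2)) := by
    simpa only [map_mul] using integrable_aeval_mul_gaussian (p * q)
  have hXI : Integrable fun x : ℝ =>
      x * (aeval x (hermite m) * aeval x (hermite n)) * exp (-(x ^ 2 / 2)) := by
    have := integrable_aeval_mul_gaussian (X * (hermite m * hermite n))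
    simp only [map_mul, aeval_X] at this
    exact this
  have ibp := integral_aeval_derivative_mul_gaussian (hermite m * hermite n)
  simp only [derivative_mul, map_add, map_mul, add_mul] at ibp
  rw [integral_add (hI _ _) (hI _ _)] at ibp
  calc _ = ∫ x : ℝ, (x * (aeval x (hermite m) * aeval x (hermite n)) * exp (-(x ^ 2 / 2)) -
          aeval x (hermite m) * aeval x (derivative (hermite n)) * exp (-(x ^ 2 / 2))) := by
        congr 1; ext x
        rw [hermite_succ]
        simp only [map_sub, map_mul, aeval_X]
        ring
    _ = _ := by
        rw [integral_sub hXI (hI _ _), ← ibp]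
        ring

theorem integral_hermite_mul_hermite_mul_gaussian (m n : ℕ) :
    ∫ x : ℝ, aeval x (hermite m) * aeval x (hermite n) * exp (-(x ^ 2 / 2)) =
      if m = n then m.factorial * √(2 * π) else 0 := by
  induction n generalizing m with
  | zero =>
    cases m with
    | zero =>
      simp only [hermite_zero, map_one, one_mul, if_pos, Nat.factorial_zero, Nat.cast_one]
      calc ∫ x : ℝ, exp (-(x ^ 2 / 2)) = ∫ x : ℝ, exp (-(1 / 2) * x ^ 2) := by ring_nf
        _ = √(2 * π) := by rw [integral_gaussian]; ring_nf
    | succ k =>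
      simp_rw [mul_comm (aeval _ (hermite (k + 1))), integral_hermite_mul_hermite_succ_mul_gaussian]
      simp [hermite_zero]
  | succ n ih =>
    rw [integral_hermite_mul_hermite_succ_mul_gaussian]
    cases m with
    | zero => simp [hermite_zero]
    | succ k =>
      simp only [derivative_hermite_succ, map_mul, map_add, map_natCast, map_one]
      simp_rw [mul_assoc ((k : ℝ) + 1), integral_const_mul, ih, Nat.factorial_succ]
      simp only [Nat.add_right_cancel_iff, mul_ite, mul_zero, Nat.cast_mul, Nat.cast_add,
        Nat.cast_one, mul_assoc]

theorem iteratedDeriv_gaussian (n : ℕ) (x : ℝ) :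
    iteratedDeriv n (fun y : ℝ => exp (-(y ^ 2 / 2))) x =
      (-1) ^ n * aeval x (hermite n) * exp (-(x ^ 2 / 2)) := by
  rw [iteratedDeriv_eq_iterate, deriv_gaussian_eq_hermite_mul_gaussian]

theorem gaussian_add_mul_gaussian_add (u v t : ℝ) :
    exp (-((t + u) ^ 2 / 2)) * exp (-((t + v) ^ 2 / 2)) =
      exp (-((u - v) ^ 2 / 4)) * exp (-((√2 * t + (u + v) / √2) ^ 2 / 2)) := by
  rw [← exp_add, ← exp_add]
  congr 1
  field_simp
  rw [sq_sqrt zero_le_two]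
  ring

theorem sqrt_two_pow_mul_aeval_hermite_add_div_sqrt_two (n : ℕ) (u v : ℝ) :
    √2 ^ n * aeval ((u + v) / √2) (hermite n) =
      ∑ i ∈ Finset.range (n + 1), n.choose i * aeval u (hermite i) * aeval v (hermite (n - i)) := by
  set γ : ℝ → ℝ := fun y => exp (-(y ^ 2 / 2)) with hγ
  set s := (u + v) / √2
  have hshift (c : ℝ) : ContDiff ℝ n fun t => γ (t + c) :=
    (show ContDiff ℝ n γ by fun_prop).comp (contDiff_id.add contDiff_const)
  have leibniz : iteratedDeriv n (fun t => γ (t + u) * γ (t + v)) 0 = (-1) ^ n * γ u * γ v *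
      ∑ i ∈ Finset.range (n + 1), n.choose i * aeval u (hermite i) * aeval v (hermite (n - i)) := by
    rw [iteratedDeriv_fun_mul (hshift u).contDiffAt (hshift v).contDiffAt, Finset.mul_sum]
    refine Finset.sum_congr rfl fun i hi => ?_
    rw [iteratedDeriv_comp_add_const, iteratedDeriv_comp_add_const]
    simp only [zero_add, hγ, iteratedDeriv_gaussian]
    rw [← Nat.add_sub_cancel' (Finset.mem_range_succ_iff.mp hi), pow_add, Nat.add_sub_cancel_left]
    ring
  have rotate : iteratedDeriv n (fun t => γ (t + u) * γ (t + v)) 0 =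
      exp (-((u - v) ^ 2 / 4)) * √2 ^ n * ((-1) ^ n * aeval s (hermite n) * γ s) := by
    have hscale := iteratedDeriv_comp_const_mul (hshift s) √2
    simp only [hγ, gaussian_add_mul_gaussian_add u v]
    rw [iteratedDeriv_const_mul_field, hscale, iteratedDeriv_comp_add_const]
    simp only [mul_zero, zero_add, hγ, iteratedDeriv_gaussian]
    ring
  have hγuv : γ u * γ v = exp (-((u - v) ^ 2 / 4)) * γ s := by
    simpa using gaussian_add_mul_gaussian_add u v 0
  have hne : (-1) ^ n * γ u * γ v ≠ 0 := by positivity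
  refine mul_left_cancel₀ hne ?_
  rw [← leibniz, rotate, mul_assoc _ (γ u), hγuv]
  ring

theorem hermiteFun_eq_aeval_hermite (n : ℕ) (x : ℝ) :
    hermiteFun n x =
      aeval (x * √2) (hermite n) * exp (-x ^ 2 / 2) / (√(n.factorial) * √(√π)) := by
  have h2 : (0 : ℝ) ≤ 2 ^ n := by positivity
  have hf : (0 : ℝ) ≤ n.factorial := by positivity
  have hpi : 0 ≤ √π := sqrt_nonneg π
  rw [hermiteFun, physHermite, mul_rpow (mul_nonneg h2 hf) hpi, mul_rpow h2 hf,
    ← rpow_natCast, ← rpow_mul zero_le_two]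
  simp only [rpow_neg hf, rpow_neg hpi, ← sqrt_eq_rpow]
  have h2n : (2 : ℝ) ^ ((n : ℝ) * -(1 / 2)) * 2 ^ ((n : ℝ) / 2) = 1 := by
    rw [← rpow_add two_pos]; ring_nf; exact rpow_zero 2
  linear_combination (aeval (x * √2) (hermite n) * exp (-x ^ 2 / 2) /
    (√(n.factorial) * √(√π))) * h2n

theorem hermiteFun_mul_hermiteFun (m n : ℕ) (x : ℝ) :
    hermiteFun m x * hermiteFun n x =
      aeval (x * √2) (hermite m * hermite n) * exp (-((x * √2) ^ 2 / 2)) /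
        (√(m.factorial) * √(n.factorial) * √π) := by
  have hexp : exp (-x ^ 2 / 2) * exp (-x ^ 2 / 2) = exp (-((x * √2) ^ 2 / 2)) := by
    rw [← exp_add, mul_pow, sq_sqrt zero_le_two]; ring_nf
  rw [hermiteFun_eq_aeval_hermite, hermiteFun_eq_aeval_hermite, map_mul, ← hexp]
  field_simp
  rw [sq_sqrt (sqrt_nonneg π)]
  ring

theorem integrable_hermiteFun_mul_hermiteFun (m n : ℕ) :
    Integrable fun x => hermiteFun m x * hermiteFun n x := by
  simp_rw [hermiteFun_mul_hermiteFun]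
  exact ((integrable_aeval_mul_gaussian (hermite m * hermite n)).comp_mul_right'
    (sqrt_ne_zero'.mpr two_pos)).div_const _

theorem integral_hermiteFun_mul_hermiteFun (m n : ℕ) :
    ∫ x, hermiteFun m x * hermiteFun n x = if m = n then 1 else 0 := by
  simp_rw [hermiteFun_mul_hermiteFun, integral_div, map_mul]
  rw [Measure.integral_comp_mul_right (fun u => aeval u (hermite m) * aeval u (hermite n) *
    exp (-(u ^ 2 / 2))), integral_hermite_mul_hermite_mul_gaussian]
  split_ifs with h
  · subst h
    have : (0 : ℝ) < m.factorial := by positivity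
    rw [smul_eq_mul, abs_of_pos (by positivity), sqrt_mul zero_le_two, mul_self_sqrt this.le]
    field_simp
  · simp

noncomputable def beamSplitterAmplitude (m k : ℕ) : ℝ := √(m.choose k) / √2 ^ m

theorem choose_div_sqrt_factorial {m k : ℕ} (hk : k ≤ m) :
    (m.choose k : ℝ) / √(m.factorial) = √(m.choose k) / (√(k.factorial) * √((m - k).factorial)) := by
  have hfac : √(m.factorial : ℝ) = √(m.choose k) * √(k.factorial) * √((m - k).factorial) := by
    rw [← sqrt_mul (by positivity), ← sqrt_mul (by positivity)]
    exact_mod_cast congrArg (fun n : ℕ => √(n : ℝ)) (Nat.choose_mul_factorial_mul_factorial hk).symm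
  have hC : (0 : ℝ) < m.choose k := by exact_mod_cast Nat.choose_pos hk
  rw [hfac, div_eq_div_iff (by positivity) (by positivity)]
  nth_rewrite 1 [← mul_self_sqrt hC.le]
  ring

theorem hermiteFun_rotate_mul_hermiteFun_zero_rotate_eq_sum (m : ℕ) (x y : ℝ) :
    hermiteFun m ((x + y) / √2) * hermiteFun 0 ((y - x) / √2) =
      ∑ k ∈ Finset.range (m + 1),
        beamSplitterAmplitude m k * hermiteFun k x * hermiteFun (m - k) y := by
  have hexp : exp (-((x + y) / √2) ^ 2 / 2) * exp (-((y - x) / √2) ^ 2 / 2) =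
      exp (-x ^ 2 / 2) * exp (-y ^ 2 / 2) := by
    rw [← exp_add, ← exp_add, div_pow, div_pow, sq_sqrt zero_le_two]
    ring_nf
  have hadd := sqrt_two_pow_mul_aeval_hermite_add_div_sqrt_two m (x * √2) (y * √2)
  rw [show (x * √2 + y * √2) / √2 = (x + y) / √2 * √2 by field_simp] at hadd
  calc _ = (√2 ^ m * aeval ((x + y) / √2 * √2) (hermite m)) *
        (exp (-x ^ 2 / 2) * exp (-y ^ 2 / 2) / (√2 ^ m * √(m.factorial) * (√(√π) * √(√π)))) := by
        rw [hermiteFun_eq_aeval_hermite, hermiteFun_eq_aeval_hermite, ← hexp]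
        simp only [hermite_zero, map_one, Nat.factorial_zero, Nat.cast_one, sqrt_one]
        field_simp
    _ = _ := by
        rw [hadd, Finset.sum_mul]
        refine Finset.sum_congr rfl fun k hk => ?_
        rw [hermiteFun_eq_aeval_hermite, hermiteFun_eq_aeval_hermite, beamSplitterAmplitude]
        linear_combination (aeval (x * √2) (hermite k) * aeval (y * √2) (hermite (m - k)) *
          exp (-x ^ 2 / 2) * exp (-y ^ 2 / 2) / (√2 ^ m * (√(√π) * √(√π)))) *
          choose_div_sqrt_factorial (Finset.mem_range_succ_iff.mp hk)

/-- the beam-splitter matrix element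
`⟨m,0|U_{π/4}|m,0⟩ = ∫ φ_m(x)φ_0(y)φ_m((x+y)/√2)φ_0((y−x)/√2) dx dy = 2^{−m/2}`. -/
theorem hermite_beam_splitter_matrix_element (m : ℕ) :
    (∫ p : ℝ × ℝ,
        hermiteFun m p.1 * hermiteFun 0 p.2 *
          hermiteFun m ((p.1 + p.2) / Real.sqrt 2) *
          hermiteFun 0 ((p.2 - p.1) / Real.sqrt 2))
      = (2 : ℝ) ^ (-(m : ℝ) / 2) := by
  have hexpand (p : ℝ × ℝ) :
      hermiteFun m p.1 * hermiteFun 0 p.2 * hermiteFun m ((p.1 + p.2) / √2) *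
          hermiteFun 0 ((p.2 - p.1) / √2) =
        ∑ k ∈ Finset.range (m + 1), beamSplitterAmplitude m k *
          ((hermiteFun m p.1 * hermiteFun k p.1) * (hermiteFun 0 p.2 * hermiteFun (m - k) p.2)) := by
    rw [mul_assoc, hermiteFun_rotate_mul_hermiteFun_zero_rotate_eq_sum, Finset.mul_sum]
    exact Finset.sum_congr rfl fun k _ => by ring
  have hint (k : ℕ) : Integrable (fun p : ℝ × ℝ =>
      (hermiteFun m p.1 * hermiteFun k p.1) * (hermiteFun 0 p.2 * hermiteFun (m - k) p.2)) :=
    (integrable_hermiteFun_mul_hermiteFun m k).mul_prod (integrable_hermiteFun_mul_hermiteFun 0 _)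
  calc _ = ∑ k ∈ Finset.range (m + 1), beamSplitterAmplitude m k * ∫ p : ℝ × ℝ,
          (hermiteFun m p.1 * hermiteFun k p.1) * (hermiteFun 0 p.2 * hermiteFun (m - k) p.2) := by
        simp_rw [hexpand]
        rw [integral_finsetSum _ fun k _ => (hint k).const_mul _]
        simp_rw [integral_const_mul]
    _ = ∑ k ∈ Finset.range (m + 1), beamSplitterAmplitude m k *
          ((∫ x, hermiteFun m x * hermiteFun k x) * ∫ y, hermiteFun 0 y * hermiteFun (m - k) y) :=
        Finset.sum_congr rfl fun k _ => congrArg _ (integral_prod_mul (μ := volume) (ν := volume)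
          (fun x => hermiteFun m x * hermiteFun k x) fun y => hermiteFun 0 y * hermiteFun (m - k) y)
    _ = beamSplitterAmplitude m m := by
        simp_rw [integral_hermiteFun_mul_hermiteFun]
        rw [Finset.sum_eq_single_of_mem m (by simp) fun k _ hkm => by simp [Ne.symm hkm]]
        simp
    _ = _ := by
        rw [beamSplitterAmplitude, Nat.choose_self, Nat.cast_one, sqrt_one, one_div, sqrt_eq_rpow,
          ← rpow_natCast, ← rpow_mul zero_le_two, ← rpow_neg zero_le_two]
        ring_nf
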